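/- arXiv:1405.3039 — 3 statements merged into one kernel-verified Lean document; each statement's English description precedes it below -/
import Mathlib

section
/- Let m ≥ 2 be an integer. For each multiple n of m let d_{m,n} denote the infimum of d(ω, ω') = (1/2)·∑_{i=1}^n |ω_i − ω'_i| over all feasible catalyst pairs (ω, ω') of nonincreasing probability vectors in ℝ^n. Then for every integer a ≥ 1, with n = m^a and k = m^{a+1}, one has d_{m,k} ≥ d_{m,n}/(1 + d_{m,n}). -/
/-!
Let `(ω, ω')` be feasible in dimension `n * m` at distance `e < 1`. The majorization at
`k = n * m` forces `ω` to vanish beyond its first `n` entries, so `ω'` has mass `p ≥ 1 - e` there.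
Keep the first `n / m` entries of `ω`, of mass `β ≥ p`, and raise the first `n` entries of `ω'` to
`max ω'_l μ`, the water level `μ` being chosen so that they also have mass `β`. The repeated
truncated `ω` still majorizes the raised `ω'`: as long as `ω'_l ≥ μ` nothing has changed, and once
a raised increment `μ` exceeds the (nonincreasing) increment of the majorant it does so up to `n`,
where both partial sums equal `β`. The new pair is at distance at most `e`, hence after
normalization by `β` at most `e / β ≤ e / (1 - e)`. So `d_n ≤ e / (1 - e)`, i.e.
`e ≥ d_n / (1 + d_n)`.
-/

/-- A pair `(ω, ω')` of vectors in `ℝ^n` is a feasible catalyst pair (for an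
`m`-dimensional system with trivial Hamiltonian) if both are probability vectors
with nonincreasing entries, and the vector obtained by repeating each entry
`ω i / m` exactly `m` times majorizes the vector `(ω'_1, …, ω'_n, 0, …, 0)` in
`ℝ^(n·m)`, i.e. every partial sum of the former dominates that of the latter.
This encodes the thermo-majorization condition `ω ⊗ (I/m) ≻ ω' ⊗ |0⟩⟨0|`. -/
def FeasiblePair (m n : ℕ) (ω ω' : Fin n → ℝ) : Prop :=
  (∀ i, 0 ≤ ω i) ∧ (∀ i, 0 ≤ ω' i) ∧
  (∑ i, ω i = 1) ∧ (∑ i, ω' i = 1) ∧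
  (∀ i j : Fin n, i ≤ j → ω j ≤ ω i) ∧
  (∀ i j : Fin n, i ≤ j → ω' j ≤ ω' i) ∧
  (∀ k, k ≤ n * m →
    (∑ l ∈ Finset.range k, if h : l < n then ω' ⟨l, h⟩ else 0) ≤
    (∑ l ∈ Finset.range k, if h : l / m < n then ω ⟨l / m, h⟩ / m else 0))

/-- `dOpt m n` is the infimum of the trace distance `(1/2)·∑ |ω i − ω' i|`
over all feasible catalyst pairs `(ω, ω')` in dimension `n`. -/
noncomputable def dOpt (m n : ℕ) : ℝ :=
  sInf {d : ℝ | ∃ ω ω' : Fin n → ℝ, FeasiblePair m n ω ω' ∧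
    d = (1 / 2) * ∑ i, |ω i - ω' i|}

open Finset

section PaddedSums

variable {M : Type*}

lemma sum_range_ite_lt [AddCommMonoid M] (f : ℕ → M) (k c : ℕ) :
    ∑ l ∈ range k, (if l < c then f l else 0) = ∑ l ∈ range (min k c), f l := by
  rw [← sum_filter]
  congr 1
  ext l
  simp

lemma sum_range_mul_div [AddCommMonoid M] (f : ℕ → M) (q m : ℕ) :
    ∑ l ∈ range (q * m), f (l / m) = m • ∑ t ∈ range q, f t := by
  induction q with
  | zero => simp
  | succ q ih =>
    have hblock : ∀ r ∈ range m, f ((q * m + r) / m) = f q := by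
      intro r hr
      have hm : 0 < m := pos_of_gt (mem_range.1 hr)
      rw [Nat.add_comm, Nat.add_mul_div_right _ _ hm, Nat.div_eq_of_lt (mem_range.1 hr),
        Nat.zero_add]
    rw [Nat.succ_mul, sum_range_add, ih, sum_congr rfl hblock, sum_const, card_range,
      sum_range_succ, smul_add]

lemma antitone_ite_lt [Preorder M] [Zero M] {f : ℕ → M} (hf : Antitone f) (hf0 : ∀ l, 0 ≤ f l)
    (c : ℕ) : Antitone fun l => if l < c then f l else 0 := by
  intro i j hij
  dsimp only
  split_ifs with hj hi hi
  · exact hf hij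
  · exact absurd (hij.trans_lt hj) hi
  · exact hf0 i
  · exact le_rfl

lemma sum_range_div_div {m n : ℕ} (hm : 0 < m) (hmn : m ∣ n) (w : ℕ → ℝ) :
    ∑ l ∈ range n, w (l / m) / m = ∑ t ∈ range (n / m), w t := by
  conv_lhs => rw [← Nat.div_mul_cancel hmn]
  rw [sum_range_mul_div (fun t => w t / m), nsmul_eq_mul, mul_sum]
  exact sum_congr rfl fun t _ => by field_simp

lemma Antitone.nonneg_of_eq_zero {v : ℕ → ℝ} (hv : Antitone v) {n : ℕ}
    (hvn : ∀ l, n ≤ l → v l = 0) (l : ℕ) : 0 ≤ v l :=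
  (hvn _ (le_max_right l n)).symm.le.trans (hv (le_max_left l n))

end PaddedSums

section WaterFilling

variable {g p : ℕ → ℝ}

theorem sum_range_max_le_of_antitone (hg : Antitone g) (hp : Antitone p) (μ : ℝ) {n : ℕ}
    (hpg : ∀ j ≤ n, ∑ l ∈ range j, p l ≤ ∑ l ∈ range j, g l)
    (hn : ∑ l ∈ range n, max (p l) μ ≤ ∑ l ∈ range n, g l) :
    ∀ j ≤ n, ∑ l ∈ range j, max (p l) μ ≤ ∑ l ∈ range j, g l := by
  intro j hj
  induction j with
  | zero => simp
  | succ j ih =>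
    by_cases hstep : max (p j) μ ≤ g j
    · rw [sum_range_succ, sum_range_succ]
      linarith [ih (by omega)]
    rcases le_total μ (p j) with hμ | hμ
    · have hcap : ∀ l ∈ range (j + 1), max (p l) μ = p l := fun l hl =>
        max_eq_left (hμ.trans (hp (Nat.lt_succ_iff.1 (mem_range.1 hl))))
      rw [sum_congr rfl hcap]
      exact hpg _ hj
    · -- from `j` on every raised entry is `μ`, which exceeds every remaining increment of `g`
      have htail : ∑ l ∈ Ico (j + 1) n, g l ≤ ∑ l ∈ Ico (j + 1) n, max (p l) μ := by
        refine sum_le_sum fun l hl => ?_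
        have hgl : g l ≤ g j := hg (by have := (mem_Ico.1 hl).1; omega)
        linarith [max_eq_right hμ, le_max_right (p l) μ, not_le.1 hstep]
      rw [← sum_range_add_sum_Ico _ hj, ← sum_range_add_sum_Ico _ hj] at hn
      linarith

lemma exists_sum_range_max_eq (hp : ∀ l, 0 ≤ p l) {n : ℕ} (hn : 0 < n) {β : ℝ}
    (hβ : ∑ l ∈ range n, p l ≤ β) : ∃ μ, ∑ l ∈ range n, max (p l) μ = β := by
  have hβ0 : 0 ≤ β := (sum_nonneg fun l _ => hp l).trans hβ
  have hcont : Continuous fun μ => ∑ l ∈ range n, max (p l) μ := by fun_prop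
  have hlow : ∑ l ∈ range n, max (p l) 0 ≤ β := by
    simpa only [max_eq_left (hp _)] using hβ
  have hhigh : β ≤ ∑ l ∈ range n, max (p l) β := by
    have := card_nsmul_le_sum (range n) (fun l => max (p l) β) β fun l _ => le_max_right _ _
    rw [card_range, nsmul_eq_mul] at this
    nlinarith [(Nat.one_le_cast (α := ℝ)).2 hn]
  obtain ⟨μ, -, hμ⟩ := intermediate_value_Icc hβ0 hcont.continuousOn ⟨hlow, hhigh⟩
  exact ⟨μ, hμ⟩

lemma abs_ite_sub_ite_le {w w' : ℕ → ℝ} {l n : ℕ} (hw0 : 0 ≤ w l) (hl : l < n) (c : ℕ)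
    (μ : ℝ) :
    |(if l < c then w l else 0) - (if l < n then max (w' l) μ else 0)| ≤
      (w l - if l < c then w l else 0) + |w l - w' l| + (max (w' l) μ - w' l) := by
  have hcut : |(if l < c then w l else 0) - w l| = w l - if l < c then w l else 0 := by
    split_ifs <;> simp [abs_of_nonneg hw0]
  have hcap : |w' l - max (w' l) μ| = max (w' l) μ - w' l := by
    rw [abs_sub_comm, abs_of_nonneg (sub_nonneg.2 (le_max_left _ _))]
  rw [if_pos hl]
  linarith [abs_sub_le (if l < c then w l else 0) (w l) (max (w' l) μ),
    abs_sub_le (w l) (w' l) (max (w' l) μ)]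

end WaterFilling

def padZero {M : Type*} [Zero M] {n : ℕ} (ω : Fin n → M) : ℕ → M :=
  fun l => if h : l < n then ω ⟨l, h⟩ else 0

section PadZero

variable {M : Type*} {n : ℕ}

@[simp]
lemma padZero_val [Zero M] (ω : Fin n → M) (i : Fin n) : padZero ω i = ω i :=
  dif_pos i.isLt

lemma padZero_of_le [Zero M] (ω : Fin n → M) {l : ℕ} (hl : n ≤ l) : padZero ω l = 0 :=
  dif_neg hl.not_gt

lemma sum_range_padZero [AddCommMonoid M] (ω : Fin n → M) :
    ∑ l ∈ range n, padZero ω l = ∑ i, ω i := by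
  simp [← Fin.sum_univ_eq_sum_range]

lemma sum_range_abs_sub_padZero (ω ω' : Fin n → ℝ) :
    ∑ l ∈ range n, |padZero ω l - padZero ω' l| = ∑ i, |ω i - ω' i| := by
  simp [← Fin.sum_univ_eq_sum_range]

lemma antitone_padZero [Preorder M] [Zero M] {ω : Fin n → M} (h0 : ∀ i, 0 ≤ ω i)
    (hω : ∀ i j : Fin n, i ≤ j → ω j ≤ ω i) : Antitone (padZero ω) := by
  intro i j hij
  unfold padZero
  split_ifs with hj hi hi
  · exact hω _ _ hij
  · exact absurd (hij.trans_lt hj) hi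
  · exact h0 _
  · exact le_rfl

end PadZero

/-- An unnormalized, `ℕ`-indexed `FeasiblePair`; nonnegativity follows from antitonicity. -/
structure FeasibleSeqPair (m n : ℕ) (u u' : ℕ → ℝ) : Prop where
  antitone_left : Antitone u
  antitone_right : Antitone u'
  eq_zero_left : ∀ l, n ≤ l → u l = 0
  eq_zero_right : ∀ l, n ≤ l → u' l = 0
  sum_eq : ∑ l ∈ range n, u l = ∑ l ∈ range n, u' l
  majorizes : ∀ k ≤ n * m, ∑ l ∈ range k, u' l ≤ ∑ l ∈ range k, u (l / m) / m

lemma FeasiblePair.feasibleSeqPair {m n : ℕ} {ω ω' : Fin n → ℝ} (h : FeasiblePair m n ω ω') :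
    FeasibleSeqPair m n (padZero ω) (padZero ω') := by
  obtain ⟨h0, h0', hsum, hsum', hω, hω', hmaj⟩ := h
  refine ⟨antitone_padZero h0 hω, antitone_padZero h0' hω', fun l => padZero_of_le ω,
    fun l => padZero_of_le ω', by rw [sum_range_padZero, sum_range_padZero, hsum, hsum'],
    fun k hk => (hmaj k hk).trans_eq (sum_congr rfl fun l _ => ?_)⟩
  unfold padZero
  split_ifs <;> simp

lemma feasibleSeqPair_waterFill {m n : ℕ} (hm : 0 < m) (hmn : m ∣ n) {w w' : ℕ → ℝ}
    (hw : Antitone w) (hw0 : ∀ l, 0 ≤ w l) (hw' : Antitone w') (hw'0 : ∀ l, 0 ≤ w' l)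
    (hmaj : ∀ k ≤ n, ∑ l ∈ range k, w' l ≤ ∑ l ∈ range k, w (l / m) / m) {μ : ℝ}
    (hμ : ∑ l ∈ range n, max (w' l) μ = ∑ t ∈ range (n / m), w t) :
    FeasibleSeqPair m n (fun l => if l < n / m then w l else 0)
      (fun l => if l < n then max (w' l) μ else 0) := by
  have hdiv : ∀ l, l / m < n / m ↔ l < n := fun l => by
    rw [Nat.div_lt_iff_lt_mul hm, Nat.div_mul_cancel hmn]
  refine ⟨antitone_ite_lt hw hw0 _,
    antitone_ite_lt (fun i j hij => max_le_max (hw' hij) le_rfl)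
      (fun l => (hw'0 l).trans (le_max_left _ _)) _,
    fun l hl => if_neg (not_lt.2 ((Nat.div_le_self n m).trans hl)),
    fun l hl => if_neg (not_lt.2 hl), ?_, fun k _ => ?_⟩
  · rw [sum_range_ite_lt, sum_range_ite_lt, min_self, min_eq_right (Nat.div_le_self n m), hμ]
  · have hrepeat : ∀ l, (if l / m < n / m then w (l / m) else 0) / m =
        if l < n then w (l / m) / m else 0 := fun l => by
      simp only [hdiv]
      split_ifs <;> simp
    simp only [hrepeat, sum_range_ite_lt]
    refine sum_range_max_le_of_antitone (fun i j hij => ?_) hw' μ hmaj ?_ _ (min_le_right k n)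
    · exact div_le_div_of_nonneg_right (hw (Nat.div_le_div_right hij)) (Nat.cast_nonneg m)
    · rw [hμ, sum_range_div_div hm hmn]

namespace FeasibleSeqPair

variable {m n : ℕ} {u u' w w' : ℕ → ℝ}

lemma feasiblePair (h : FeasibleSeqPair m n u u') {c : ℝ} (hc : ∑ l ∈ range n, u l = c)
    (hc0 : 0 < c) : FeasiblePair m n (fun i => u i / c) (fun i => u' i / c) := by
  have hsum : ∀ v : ℕ → ℝ, ∑ i : Fin n, v i / c = (∑ l ∈ range n, v l) / c := fun v => by
    rw [Fin.sum_univ_eq_sum_range (fun l => v l / c), sum_div]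
  refine ⟨fun i => div_nonneg (h.antitone_left.nonneg_of_eq_zero h.eq_zero_left _) hc0.le,
    fun i => div_nonneg (h.antitone_right.nonneg_of_eq_zero h.eq_zero_right _) hc0.le,
    by rw [hsum, hc, div_self hc0.ne'], by rw [hsum, ← h.sum_eq, hc, div_self hc0.ne'],
    fun i j hij => div_le_div_of_nonneg_right (h.antitone_left hij) hc0.le,
    fun i j hij => div_le_div_of_nonneg_right (h.antitone_right hij) hc0.le, fun k hk => ?_⟩
  have hleft : ∀ l, (if hl : l < n then u' l / c else 0) = u' l / c := fun l => by
    split_ifs with hl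
    · rfl
    · rw [h.eq_zero_right l (not_lt.1 hl), zero_div]
  have hright : ∀ l, (if hl : l / m < n then u (l / m) / c / m else 0) = u (l / m) / m / c :=
    fun l => by
      split_ifs with hl
      · ring
      · rw [h.eq_zero_left _ (not_lt.1 hl), zero_div, zero_div]
  simp only [hleft, hright]
  rw [← sum_div, ← sum_div]
  exact div_le_div_of_nonneg_right (h.majorizes k hk) hc0.le

lemma eq_zero_left_of_mul (h : FeasibleSeqPair m (n * m) w w') (hm : 0 < m) (l : ℕ)
    (hl : n ≤ l) : w l = 0 := by
  by_cases hlN : l < n * m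
  · have hnN : n ≤ n * m := Nat.le_mul_of_pos_right n hm
    have hfull : ∑ l ∈ range (n * m), w l ≤ ∑ t ∈ range n, w t := by
      have := h.majorizes (n * m) (Nat.le_mul_of_pos_right _ hm)
      rwa [← h.sum_eq, sum_range_div_div hm (dvd_mul_left m n), Nat.mul_div_cancel _ hm] at this
    rw [← sum_range_add_sum_Ico _ hnN] at hfull
    have hw0 := h.antitone_left.nonneg_of_eq_zero h.eq_zero_left
    exact (sum_eq_zero_iff_of_nonneg fun i _ => hw0 i).1
      (le_antisymm (by linarith) (sum_nonneg fun i _ => hw0 i)) l (mem_Ico.2 ⟨hl, hlN⟩)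
  · exact h.eq_zero_left l (not_lt.1 hlN)

theorem exists_restrict_of_mul (h : FeasibleSeqPair m (n * m) w w') (hm : 0 < m) (hmn : m ∣ n)
    (hn : 0 < n) (hw1 : ∑ l ∈ range (n * m), w l = 1) :
    ∃ v v', FeasibleSeqPair m n v v' ∧
      1 - (1 / 2) * ∑ l ∈ range (n * m), |w l - w' l| ≤ ∑ l ∈ range n, v l ∧
      (1 / 2) * ∑ l ∈ range n, |v l - v' l| ≤ (1 / 2) * ∑ l ∈ range (n * m), |w l - w' l| := by
  have hnN : n ≤ n * m := Nat.le_mul_of_pos_right n hm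
  have hw0 := h.antitone_left.nonneg_of_eq_zero h.eq_zero_left
  have hw'0 := h.antitone_right.nonneg_of_eq_zero h.eq_zero_right
  have hsupp := h.eq_zero_left_of_mul hm
  have hmaj : ∀ k ≤ n, ∑ l ∈ range k, w' l ≤ ∑ l ∈ range k, w (l / m) / m :=
    fun k hk => h.majorizes k (hk.trans (hnN.trans (Nat.le_mul_of_pos_right _ hm)))
  set p := ∑ l ∈ range n, w' l
  set β := ∑ t ∈ range (n / m), w t
  have hpβ : p ≤ β := (hmaj n le_rfl).trans_eq (sum_range_div_div hm hmn w)
  have hwn : ∑ l ∈ range n, w l = 1 := by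
    rw [← hw1, ← sum_range_add_sum_Ico _ hnN,
      sum_eq_zero fun l hl => hsupp l (mem_Ico.1 hl).1, add_zero]
  have hdist : ∑ l ∈ range (n * m), |w l - w' l| = ∑ l ∈ range n, |w l - w' l| + (1 - p) := by
    have htail : ∑ l ∈ Ico n (n * m), |w l - w' l| = ∑ l ∈ Ico n (n * m), w' l :=
      sum_congr rfl fun l hl => by
        rw [hsupp l (mem_Ico.1 hl).1, zero_sub, abs_neg, abs_of_nonneg (hw'0 l)]
    have htot : p + ∑ l ∈ Ico n (n * m), w' l = 1 := by
      rw [sum_range_add_sum_Ico _ hnN, ← h.sum_eq, hw1]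
    rw [← sum_range_add_sum_Ico _ hnN, htail]
    linarith
  have hhead : 1 - p ≤ ∑ l ∈ range n, |w l - w' l| :=
    calc 1 - p = ∑ l ∈ range n, (w l - w' l) := by rw [sum_sub_distrib, hwn]
      _ ≤ _ := sum_le_sum fun l _ => le_abs_self _
  obtain ⟨μ, hμ⟩ := exists_sum_range_max_eq hw'0 hn hpβ
  have hv : ∑ l ∈ range n, (if l < n / m then w l else 0) = β := by
    rw [sum_range_ite_lt, min_eq_right (Nat.div_le_self n m)]
  refine ⟨_, _,
    feasibleSeqPair_waterFill hm hmn h.antitone_left hw0 h.antitone_right hw'0 hmaj hμ,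
    by linarith, ?_⟩
  have hterms := sum_le_sum fun l (hl : l ∈ range n) =>
    abs_ite_sub_ite_le (w' := w') (hw0 l) (mem_range.1 hl) (n / m) μ
  simp only [sum_add_distrib, sum_sub_distrib, hwn, hv, hμ] at hterms
  linarith

end FeasibleSeqPair

section dOpt

variable {m n : ℕ}

lemma dOpt_nonneg : 0 ≤ dOpt m n :=
  Real.sInf_nonneg fun _ ⟨_, _, _, hd⟩ => hd ▸ by positivity

lemma dOpt_le {ω ω' : Fin n → ℝ} (h : FeasiblePair m n ω ω') :
    dOpt m n ≤ (1 / 2) * ∑ i, |ω i - ω' i| :=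
  csInf_le ⟨0, fun _ ⟨_, _, _, hd⟩ => hd ▸ by positivity⟩ ⟨ω, ω', h, rfl⟩

lemma le_dOpt {x : ℝ} (hne : ∃ ω ω' : Fin n → ℝ, FeasiblePair m n ω ω')
    (h : ∀ ω ω' : Fin n → ℝ, FeasiblePair m n ω ω' → x ≤ (1 / 2) * ∑ i, |ω i - ω' i|) :
    x ≤ dOpt m n := by
  obtain ⟨ω, ω', hω⟩ := hne
  exact le_csInf ⟨_, ω, ω', hω, rfl⟩ fun _ ⟨ω, ω', hω, hd⟩ => hd ▸ h ω ω' hω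

lemma FeasibleSeqPair.dOpt_le {u u' : ℕ → ℝ} (h : FeasibleSeqPair m n u u') {c : ℝ}
    (hc : ∑ l ∈ range n, u l = c) (hc0 : 0 < c) :
    dOpt m n ≤ (1 / 2) * (∑ l ∈ range n, |u l - u' l|) / c := by
  refine (_root_.dOpt_le (h.feasiblePair hc hc0)).trans_eq ?_
  simp only [← sub_div, abs_div, abs_of_pos hc0]
  rw [Fin.sum_univ_eq_sum_range (fun l => |u l - u' l| / c), ← sum_div, mul_div_assoc]

/-- The point mass `m · δ₀`, with each entry repeated `m` times and divided by `m`, is the uniform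
vector on `range m`, so the majorization holds with equality. -/
lemma exists_feasiblePair (hm : 0 < m) (hmn : m ≤ n) :
    ∃ ω ω' : Fin n → ℝ, FeasiblePair m n ω ω' := by
  have h : FeasibleSeqPair m n (fun l => if l < 1 then (m : ℝ) else 0)
      (fun l => if l < m then 1 else 0) := by
    refine ⟨antitone_ite_lt antitone_const (fun _ => m.cast_nonneg) 1,
      antitone_ite_lt antitone_const (fun _ => zero_le_one) m,
      fun l hl => if_neg (by omega), fun l hl => if_neg (by omega), ?_, fun k _ => le_of_eq ?_⟩
    · rw [sum_range_ite_lt, sum_range_ite_lt, min_eq_right (by omega), min_eq_right hmn]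
      simp
    · refine sum_congr rfl fun l _ => ?_
      simp only [Nat.div_lt_one_iff hm]
      split_ifs <;> simp [hm.ne']
  refine ⟨_, _, h.feasiblePair ?_ (Nat.cast_pos.2 hm)⟩
  rw [sum_range_ite_lt, min_eq_right (by omega)]
  simp

theorem dOpt_le_of_feasiblePair_mul (hm : 0 < m) (hmn : m ∣ n) (hn : 0 < n)
    {ω ω' : Fin (n * m) → ℝ} (h : FeasiblePair m (n * m) ω ω')
    {e : ℝ} (he_def : (1 / 2) * ∑ i, |ω i - ω' i| = e) (he : e < 1) :
    dOpt m n ≤ e / (1 - e) := by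
  obtain ⟨v, v', hv, hmass, hdist⟩ := h.feasibleSeqPair.exists_restrict_of_mul hm hmn hn
    (by rw [sum_range_padZero]; exact h.2.2.1)
  rw [sum_range_abs_sub_padZero, he_def] at hmass hdist
  have he0 : 0 ≤ e := he_def ▸ by positivity
  calc dOpt m n ≤ (1 / 2) * (∑ l ∈ range n, |v l - v' l|) / ∑ l ∈ range n, v l :=
        hv.dOpt_le rfl (by linarith)
    _ ≤ e / (1 - e) := div_le_div₀ he0 hdist (by linarith) hmass

end dOpt

/-- The inductive step: for `m ≥ 2` and `a ≥ 1`, with `n = m^a` and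
`k = m^(a+1)`, one has `d_{m,k} ≥ d_{m,n}/(1 + d_{m,n})`. -/
theorem catalyst_inductive_step (m a : ℕ) (hm : 2 ≤ m) (ha : 1 ≤ a) :
    dOpt m (m ^ a) / (1 + dOpt m (m ^ a)) ≤ dOpt m (m ^ (a + 1)) := by
  have hm0 : 0 < m := by omega
  have hn : 0 < m ^ a := by positivity
  rw [pow_succ]
  refine le_dOpt (exists_feasiblePair hm0 (Nat.le_mul_of_pos_left m hn)) fun ω ω' h => ?_
  set e := (1 / 2) * ∑ i, |ω i - ω' i| with he_def
  have hd := dOpt_nonneg (m := m) (n := m ^ a)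
  rcases lt_or_ge e 1 with he | he
  · have hde := dOpt_le_of_feasiblePair_mul hm0 (dvd_pow_self m (by omega)) hn h he_def.symm he
    have he0 : 0 ≤ e := by positivity
    rw [le_div_iff₀ (by linarith)] at hde
    rw [div_le_iff₀ (by linarith)]
    linarith
  · exact (div_le_one_of_le₀ (by linarith) (by linarith)).trans he
end

section
/- Let β > 0, let E^C : Fin n → ℝ (with n ≥ 1) be catalyst energy levels with maximum E^C_max, partition function Z_C = ∑_j e^{−β·E^C_j}, and thermal probabilities τ_j = e^{−β·E^C_j}/Z_C, and let A ≥ 1 be a real number. Suppose ω, ω' : Fin n → ℝ are probability distributions (nonnegative entries summing to 1, with ω'_j > 0 for all j) satisfying max_i (ω_i/τ_i) ≥ A·max_j (ω'_j/τ_j). Then the trace distance satisfies (1/2)·∑_j |ω_j − ω'_j| ≥ (A − 1)·e^{−β·E^C_max}/Z_C. -/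
/-!
Let `M' = max_j ω'_j/τ_j`. Since `ω'` and `τ` are both probability vectors, `M' ≥ 1`.
At an index `i` where `ω_i/τ_i` is maximal, the hypothesis gives `ω_i ≥ A·M'·τ_i` while
`ω'_i ≤ M'·τ_i`, so `ω_i - ω'_i ≥ (A - 1)·τ_i ≥ (A - 1)·e^{-β·E_max}/Z`. Finally, for two
vectors with the same total mass, the `ℓ¹` distance is at least twice the difference of any
single coordinate.
-/

open Finset Real

section Finset

variable {ι : Type*} {s : Finset ι}

theorem Finset.one_le_sup'_div_of_sum_eq (hs : s.Nonempty) {q r : ι → ℝ}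
    (hr : ∀ i ∈ s, 0 < r i) (hqr : ∑ i ∈ s, q i = ∑ i ∈ s, r i) :
    1 ≤ s.sup' hs (fun j => q j / r j) := by
  obtain ⟨j, hj, hrq⟩ := exists_le_of_sum_le hs hqr.ge
  calc 1 ≤ q j / r j := (one_le_div (hr j hj)).mpr hrq
    _ ≤ _ := le_sup' (fun j => q j / r j) hj

theorem Finset.two_mul_sub_le_sum_abs_sub {p q : ι → ℝ}
    (hpq : ∑ j ∈ s, p j = ∑ j ∈ s, q j) {i : ι} (hi : i ∈ s) :
    2 * (p i - q i) ≤ ∑ j ∈ s, |p j - q j| := by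
  -- adding `∑ (p - q) = 0` turns `∑ |d|` into a sum of nonnegative terms `|d| + d`
  have hsum : ∑ j ∈ s, |p j - q j| = ∑ j ∈ s, (|p j - q j| + (p j - q j)) := by
    rw [sum_add_distrib, sum_sub_distrib, hpq, sub_self, add_zero]
  have hterm : |p i - q i| + (p i - q i) ≤ ∑ j ∈ s, (|p j - q j| + (p j - q j)) :=
    single_le_sum (f := fun j => |p j - q j| + (p j - q j))
      (fun _ _ => neg_le_iff_add_nonneg.mp (neg_le_abs _)) hi
  linarith [le_abs_self (p i - q i)]

theorem Finset.exists_mul_le_sub_of_mul_sup'_div_le (hs : s.Nonempty) {p q r : ι → ℝ}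
    (hr : ∀ i ∈ s, 0 < r i) (hqr : ∑ i ∈ s, q i = ∑ i ∈ s, r i) {A : ℝ} (hA : 1 ≤ A)
    (h : A * s.sup' hs (fun j => q j / r j) ≤ s.sup' hs (fun j => p j / r j)) :
    ∃ i ∈ s, (A - 1) * r i ≤ p i - q i := by
  set M := s.sup' hs (fun j => q j / r j)
  have hM : 1 ≤ M := one_le_sup'_div_of_sum_eq hs hr hqr
  obtain ⟨i, hi, hpi⟩ := exists_mem_eq_sup' hs (fun j => p j / r j)
  have hri := hr i hi
  have hp : A * M * r i ≤ p i := by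
    rw [← le_div_iff₀ hri, ← hpi]
    exact h
  have hq : q i ≤ M * r i := by
    rw [← div_le_iff₀ hri]
    exact le_sup' (fun j => q j / r j) hi
  refine ⟨i, hi, ?_⟩
  nlinarith [mul_nonneg (mul_nonneg (sub_nonneg.2 hA) (sub_nonneg.2 hM)) hri.le]

end Finset

section Gibbs

variable {ι : Type*} [Fintype ι]

noncomputable def gibbs (β : ℝ) (E : ι → ℝ) (j : ι) : ℝ :=
  exp (-β * E j) / ∑ k, exp (-β * E k)

theorem sum_exp_neg_mul_pos [Nonempty ι] (β : ℝ) (E : ι → ℝ) : 0 < ∑ k, exp (-β * E k) :=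
  sum_pos (fun _ _ => exp_pos _) univ_nonempty

theorem gibbs_pos [Nonempty ι] (β : ℝ) (E : ι → ℝ) (j : ι) : 0 < gibbs β E j :=
  div_pos (exp_pos _) (sum_exp_neg_mul_pos β E)

theorem sum_gibbs [Nonempty ι] (β : ℝ) (E : ι → ℝ) : ∑ j, gibbs β E j = 1 := by
  simp only [gibbs, ← sum_div, div_self (sum_exp_neg_mul_pos β E).ne']

theorem exp_neg_mul_div_le_gibbs {β : ℝ} (hβ : 0 ≤ β) {E : ι → ℝ} {Emax : ℝ} {j : ι}
    (hj : E j ≤ Emax) : exp (-β * Emax) / ∑ k, exp (-β * E k) ≤ gibbs β E j := by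
  refine div_le_div_of_nonneg_right (exp_le_exp.mpr ?_)
    (sum_nonneg fun _ _ => (exp_pos _).le)
  nlinarith

end Gibbs

theorem embezzling_error_Dinfty_bound_general
    (β : ℝ) (hβ : 0 < β) (n : ℕ) (hn : 0 < n)
    (EC : Fin n → ℝ) (ECmax : ℝ)
    (hECmax : IsGreatest (Set.range EC) ECmax)
    (ZC : ℝ) (hZC : ZC = ∑ j, Real.exp (-β * EC j))
    (τ : Fin n → ℝ) (hτ : ∀ j, τ j = Real.exp (-β * EC j) / ZC)
    (A : ℝ) (hA : 1 ≤ A)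
    (ω ω' : Fin n → ℝ)
    (hωsum : ∑ j, ω j = 1) (hω'sum : ∑ j, ω' j = 1)
    (hmax :
      A * Finset.univ.sup' (Finset.univ_nonempty_iff.mpr (Fin.pos_iff_nonempty.mp hn))
            (fun j => ω' j / τ j) ≤
        Finset.univ.sup' (Finset.univ_nonempty_iff.mpr (Fin.pos_iff_nonempty.mp hn))
          (fun i => ω i / τ i)) :
    (A - 1) * Real.exp (-β * ECmax) / ZC ≤ (1 / 2) * ∑ j, |ω j - ω' j| := by
  have : Nonempty (Fin n) := Fin.pos_iff_nonempty.mp hn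
  subst hZC
  obtain rfl : τ = gibbs β EC := funext hτ
  obtain ⟨i, -, hi⟩ := exists_mul_le_sub_of_mul_sup'_div_le _
    (fun j _ => gibbs_pos β EC j) (by rw [hω'sum, sum_gibbs]) hA hmax
  have hdist := two_mul_sub_le_sum_abs_sub (hωsum.trans hω'sum.symm) (mem_univ i)
  calc (A - 1) * exp (-β * ECmax) / ∑ j, exp (-β * EC j)
      = (A - 1) * (exp (-β * ECmax) / ∑ j, exp (-β * EC j)) := mul_div_assoc _ _ _
    _ ≤ (A - 1) * gibbs β EC i :=
        mul_le_mul_of_nonneg_left (exp_neg_mul_div_le_gibbs hβ.le (hECmax.2 ⟨i, rfl⟩))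
          (sub_nonneg.2 hA)
    _ ≤ ω i - ω' i := hi
    _ ≤ (1 / 2) * ∑ j, |ω j - ω' j| := by linarith

/-- Abstract form of the bounded-dimension embezzling bound. Given inverse
temperature `β > 0`, catalyst energy levels `EC : Fin n → ℝ` with maximum
`ECmax`, partition function `ZC = ∑ e^{−β·EC j}` and Gibbs probabilities
`τ j = e^{−β·EC j}/ZC`, and a constant `A ≥ 1`: if probability distributions
`ω, ω'` (with `ω' j > 0` for all `j`) satisfy the `D_∞`-monotonicity constraint
`max_i ω i/τ i ≥ A · max_j ω' j/τ j`, then the trace distance obeys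
`(1/2)·∑ |ω j − ω' j| ≥ (A − 1)·e^{−β·ECmax}/ZC`. -/
theorem embezzling_error_Dinfty_bound
    (β : ℝ) (hβ : 0 < β) (n : ℕ) (hn : 0 < n)
    (EC : Fin n → ℝ) (ECmax : ℝ)
    (hECmax : IsGreatest (Set.range EC) ECmax)
    (ZC : ℝ) (hZC : ZC = ∑ j, Real.exp (-β * EC j))
    (τ : Fin n → ℝ) (hτ : ∀ j, τ j = Real.exp (-β * EC j) / ZC)
    (A : ℝ) (hA : 1 ≤ A)
    (ω ω' : Fin n → ℝ)
    (hω : ∀ j, 0 ≤ ω j) (hω' : ∀ j, 0 < ω' j)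
    (hωsum : ∑ j, ω j = 1) (hω'sum : ∑ j, ω' j = 1)
    (hmax :
      A * Finset.univ.sup' (Finset.univ_nonempty_iff.mpr (Fin.pos_iff_nonempty.mp hn))
            (fun j => ω' j / τ j) ≤
        Finset.univ.sup' (Finset.univ_nonempty_iff.mpr (Fin.pos_iff_nonempty.mp hn))
          (fun i => ω i / τ i)) :
    (A - 1) * Real.exp (-β * ECmax) / ZC ≤ (1 / 2) * ∑ j, |ω j - ω' j| :=
  embezzling_error_Dinfty_bound_general β hβ n hn EC ECmax hECmax ZC hZC τ hτ A hA ω ω' hωsum hω'sum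
    hmax
end

section
/- Let β > 0 and let E : ℕ → ℝ be a nondecreasing sequence of nonnegative catalyst energy values with E_j → ∞ as j → ∞ and finite partition function Z_C = ∑_j e^{−β·E_j}. Let A ≥ 2 and set f(A) = (1/2)·A²/(A²+1). Let ω, ω' : ℕ → ℝ be nonnegative with ∑_j ω_j = ∑_j ω'_j = 1 (the sums converging), suppose ∑_j ω_j·E_j converges with ∑_j ω_j·E_j ≤ Ē for some finite Ē ≥ 0, and suppose the series ∑_j √(ω'_j)·e^{−β·E_j/2} and ∑_j √(ω_j)·e^{−β·E_j/2} converge and satisfy ∑_j √(ω'_j)·e^{−β·E_j/2} ≥ √A·∑_j √(ω_j)·e^{−β·E_j/2}. Then for every W with 0 < W < 1, letting j(W) be the least index j such that E_{j+1} > Ē/(1−W), the trace distance satisfies (1/2)·∑_j |ω_j − ω'_j| ≥ (1/2)·f(A)²·(W·e^{−β·E_{j(W)}/2})²/Z_C. In particular, the error cannot be made arbitrarily small. -/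
open Real Finset

/-!
Markov's inequality for the mean energy puts mass at least `W` on the levels `0, …, j(W)`, all of
weight at least `e^{−β E_{j(W)}/2}`; since `ω ≤ √ω`, this gives
`W e^{−β E_{j(W)}/2} ≤ S := ∑ √ω_j e^{−β E_j/2}`. The `D_{1/2}` constraint then forces
`S' − S ≥ (√A − 1) S ≥ f(A) W e^{−β E_{j(W)}/2}`, while Cauchy–Schwarz with
`(√ω'_j − √ω_j)² ≤ |ω'_j − ω_j|` bounds `(S' − S)²` by `Z_C ∑ |ω_j − ω'_j|`.
-/

lemma summable_mul_and_tsum_mul_le_sqrt_mul {ι : Type*} {f g : ι → ℝ}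
    (hf : ∀ i, 0 ≤ f i) (hg : ∀ i, 0 ≤ g i)
    (hf2 : Summable fun i => f i ^ 2) (hg2 : Summable fun i => g i ^ 2) :
    (Summable fun i => f i * g i) ∧
      ∑' i, f i * g i ≤ √((∑' i, f i ^ 2) * ∑' i, g i ^ 2) := by
  have h := summable_and_inner_le_Lp_mul_Lq_tsum_of_nonneg HolderConjugate.two_two hf hg
    (by simpa only [rpow_two] using hf2) (by simpa only [rpow_two] using hg2)
  simp only [rpow_two, ← sqrt_eq_rpow] at h
  rwa [sqrt_mul (tsum_nonneg fun i => sq_nonneg (f i))]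

lemma sq_sqrt_sub_sqrt_le_abs_sub {a b : ℝ} (ha : 0 ≤ a) (hb : 0 ≤ b) :
    (√a - √b) ^ 2 ≤ |a - b| :=
  calc (√a - √b) ^ 2 = |√a - √b| * |√a - √b| := by rw [sq, abs_mul_abs_self]
    _ ≤ |√a - √b| * (√a + √b) := by
      gcongr
      exact abs_sub_le_iff.2 ⟨by linarith [sqrt_nonneg b], by linarith [sqrt_nonneg a]⟩
    _ = |a - b| := by
      rw [← abs_of_nonneg (by positivity : 0 ≤ √a + √b), ← abs_mul]
      congr 1
      linear_combination sq_sqrt ha - sq_sqrt hb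

lemma tsum_sqrt_mul_sub_tsum_sqrt_mul_le {ι : Type*} {p q g : ι → ℝ}
    (hp : ∀ i, 0 ≤ p i) (hq : ∀ i, 0 ≤ q i) (hg : ∀ i, 0 ≤ g i)
    (hps : Summable p) (hqs : Summable q) (hg2 : Summable fun i => g i ^ 2)
    (hpg : Summable fun i => √(p i) * g i) (hqg : Summable fun i => √(q i) * g i) :
    ∑' i, √(p i) * g i - ∑' i, √(q i) * g i ≤ √((∑' i, |p i - q i|) * ∑' i, g i ^ 2) := by
  have habs : Summable fun i => |p i - q i| :=
    (hps.add hqs).of_nonneg_of_le (fun i => abs_nonneg _) fun i =>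
      abs_sub_le_iff.2 ⟨by linarith [hq i], by linarith [hp i]⟩
  have hsq (i : ι) : |√(p i) - √(q i)| ^ 2 ≤ |p i - q i| := by
    rw [sq_abs]; exact sq_sqrt_sub_sqrt_le_abs_sub (hp i) (hq i)
  have hsqs : Summable fun i => |√(p i) - √(q i)| ^ 2 :=
    habs.of_nonneg_of_le (fun i => sq_nonneg _) hsq
  obtain ⟨hsum, hcs⟩ :=
    summable_mul_and_tsum_mul_le_sqrt_mul (fun i => abs_nonneg _) hg hsqs hg2
  calc ∑' i, √(p i) * g i - ∑' i, √(q i) * g i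
      = ∑' i, (√(p i) - √(q i)) * g i := by
        rw [← hpg.tsum_sub hqg]; simp only [sub_mul]
    _ ≤ ∑' i, |√(p i) - √(q i)| * g i :=
        (hpg.sub hqg |>.congr fun i => by ring).tsum_le_tsum
          (fun i => mul_le_mul_of_nonneg_right (le_abs_self _) (hg i)) hsum
    _ ≤ √((∑' i, |√(p i) - √(q i)| ^ 2) * ∑' i, g i ^ 2) := hcs
    _ ≤ √((∑' i, |p i - q i|) * ∑' i, g i ^ 2) :=
        sqrt_le_sqrt <| mul_le_mul_of_nonneg_right (hsqs.tsum_le_tsum hsq habs)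
          (tsum_nonneg fun i => sq_nonneg _)

lemma mul_tsum_nat_add_le_tsum_mul {ω E : ℕ → ℝ} (hω : ∀ j, 0 ≤ ω j) (hE : ∀ j, 0 ≤ E j)
    (hmono : Monotone E) (hωs : Summable ω) (hωE : Summable fun j => ω j * E j) (n : ℕ) :
    E n * ∑' j, ω (j + n) ≤ ∑' j, ω j * E j :=
  calc E n * ∑' j, ω (j + n) = ∑' j, ω (j + n) * E n := by
        rw [← tsum_mul_left]; simp only [mul_comm]
    _ ≤ ∑' j, ω (j + n) * E (j + n) :=
        ((summable_nat_add_iff n).2 hωs |>.mul_right _).tsum_le_tsum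
          (fun j => mul_le_mul_of_nonneg_left (hmono (Nat.le_add_left n j)) (hω _))
          ((summable_nat_add_iff n).2 hωE)
    _ ≤ ∑' j, ω j * E j := by
        rw [← hωE.sum_add_tsum_nat_add n]
        exact le_add_of_nonneg_left (sum_nonneg fun i _ => mul_nonneg (hω i) (hE i))

lemma lt_sum_range_of_tsum_mul_le {ω E : ℕ → ℝ} (hω : ∀ j, 0 ≤ ω j) (hE : ∀ j, 0 ≤ E j)
    (hmono : Monotone E) (hωs : Summable ω) (hωE : Summable fun j => ω j * E j)
    (hω1 : ∑' j, ω j = 1) {Ebar W : ℝ} (hEbar : ∑' j, ω j * E j ≤ Ebar) (hW : W < 1) {n : ℕ}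
    (hn : Ebar / (1 - W) < E n) : W < ∑ i ∈ range n, ω i := by
  have htail : ∑' j, ω (j + n) < 1 - W := by
    refine lt_of_mul_lt_mul_left ?_ (hE n)
    calc E n * ∑' j, ω (j + n) ≤ Ebar :=
          (mul_tsum_nat_add_le_tsum_mul hω hE hmono hωs hωE n).trans hEbar
      _ < E n * (1 - W) := by rwa [div_lt_iff₀ (by linarith)] at hn
  linarith [hωs.sum_add_tsum_nat_add n]

lemma sum_range_succ_mul_le_tsum_sqrt_mul {ω h : ℕ → ℝ} (hω1 : ∀ j, ω j ≤ 1)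
    (hh : Antitone h) (hh0 : ∀ j, 0 ≤ h j) (hs : Summable fun j => √(ω j) * h j) (n : ℕ) :
    (∑ i ∈ range (n + 1), ω i) * h n ≤ ∑' j, √(ω j) * h j :=
  calc (∑ i ∈ range (n + 1), ω i) * h n = ∑ i ∈ range (n + 1), ω i * h n := sum_mul ..
    _ ≤ ∑ i ∈ range (n + 1), √(ω i) * h i :=
        sum_le_sum fun i hi => mul_le_mul (le_sqrt_self_iff.2 (hω1 i))
          (hh (Nat.lt_succ_iff.1 (mem_range.1 hi))) (hh0 n) (sqrt_nonneg _)
    _ ≤ ∑' j, √(ω j) * h j :=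
        hs.sum_le_tsum _ fun i _ => mul_nonneg (sqrt_nonneg _) (hh0 i)

lemma one_half_mul_sq_div_sq_add_one_le_sqrt_sub_one {A : ℝ} (hA : 2 ≤ A) :
    1 / 2 * (A ^ 2 / (A ^ 2 + 1)) ≤ √A - 1 := by
  obtain ⟨s, hs, rfl⟩ : ∃ s, 0 ≤ s ∧ A = s ^ 2 :=
    ⟨√A, sqrt_nonneg A, (sq_sqrt (by linarith)).symm⟩
  have hpoly : 0 ≤ 2 * s ^ 5 - 3 * s ^ 4 + 2 * s - 2 := by
    nlinarith [sq_nonneg (s ^ 2 - 2), sq_nonneg (s - 1), mul_nonneg hs (sq_nonneg (s - 1))]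
  have hdiff : s - 1 - 1 / 2 * ((s ^ 2) ^ 2 / ((s ^ 2) ^ 2 + 1)) =
      (2 * s ^ 5 - 3 * s ^ 4 + 2 * s - 2) / (2 * (s ^ 4 + 1)) := by
    field_simp
    ring
  rw [sqrt_sq hs, ← sub_nonneg, hdiff]
  positivity

theorem embezzling_error_energy_constraint_general
    (β : ℝ) (hβ : 0 < β)
    (E : ℕ → ℝ) (hmono : Monotone E) (hpos : ∀ j, 0 ≤ E j)
    (ZC : ℝ) (hZCsummable : Summable (fun j => Real.exp (-β * E j)))
    (hZC : ∑' j, Real.exp (-β * E j) = ZC)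
    (A : ℝ) (hA : 2 ≤ A)
    (ω ω' : ℕ → ℝ) (hω : ∀ j, 0 ≤ ω j) (hω' : ∀ j, 0 ≤ ω' j)
    (hωsummable : Summable ω) (hω'summable : Summable ω')
    (hωsum : ∑' j, ω j = 1)
    (Ebar : ℝ)
    (hEsummable : Summable (fun j => ω j * E j))
    (hE : ∑' j, ω j * E j ≤ Ebar)
    (h1 : Summable (fun j => Real.sqrt (ω' j) * Real.exp (-β * E j / 2)))
    (h2 : Summable (fun j => Real.sqrt (ω j) * Real.exp (-β * E j / 2)))
    (hmon : Real.sqrt A * ∑' j, Real.sqrt (ω j) * Real.exp (-β * E j / 2) ≤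
      ∑' j, Real.sqrt (ω' j) * Real.exp (-β * E j / 2))
    (W : ℝ) (hW0 : 0 < W) (hW1 : W < 1)
    (jW : ℕ) (hjW : IsLeast {j : ℕ | Ebar / (1 - W) < E (j + 1)} jW) :
    (1 / 2) * (1 / 2 * (A ^ 2 / (A ^ 2 + 1))) ^ 2 *
        (W * Real.exp (-β * E jW / 2)) ^ 2 / ZC ≤
      (1 / 2) * ∑' j, |ω j - ω' j| := by
  set fA := 1 / 2 * (A ^ 2 / (A ^ 2 + 1))
  set c := W * exp (-β * E jW / 2)
  set S := ∑' j, √(ω j) * exp (-β * E j / 2)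
  set T := ∑' j, |ω j - ω' j|
  have hω1 (j : ℕ) : ω j ≤ 1 := hωsum ▸ hωsummable.le_tsum j fun i _ => hω i
  have hdecay : Antitone fun j => exp (-β * E j / 2) := fun i j hij =>
    exp_le_exp.2 (by nlinarith [hmono hij])
  have hmass := lt_sum_range_of_tsum_mul_le hω hpos hmono hωsummable hEsummable hωsum hE hW1 hjW.1
  have hcS : c ≤ S := (mul_le_mul_of_nonneg_right hmass.le (exp_pos _).le).trans
    (sum_range_succ_mul_le_tsum_sqrt_mul hω1 hdecay (fun j => (exp_pos _).le) h2 jW)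
  have hexp_sq (j : ℕ) : exp (-β * E j / 2) ^ 2 = exp (-β * E j) := by
    rw [← exp_nat_mul]; ring_nf
  have hdiff := tsum_sqrt_mul_sub_tsum_sqrt_mul_le hω' hω (fun j => (exp_pos _).le) hω'summable
    hωsummable (by simpa only [hexp_sq] using hZCsummable) h1 h2
  simp only [hexp_sq, hZC, abs_sub_comm (ω' _)] at hdiff
  have hf := one_half_mul_sq_div_sq_add_one_le_sqrt_sub_one hA
  have hfA : 0 ≤ fA := by positivity
  have hc : 0 ≤ c := by positivity
  have hgap : fA * c ≤ √(T * ZC) :=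
    calc fA * c ≤ (√A - 1) * S := mul_le_mul hf hcS hc (hfA.trans hf)
      _ ≤ _ := by linarith
  have hZC0 : 0 ≤ ZC := hZC ▸ tsum_nonneg fun j => (exp_pos _).le
  have hT0 : 0 ≤ T := tsum_nonneg fun j => abs_nonneg _
  calc 1 / 2 * fA ^ 2 * c ^ 2 / ZC = 1 / 2 * ((fA * c) ^ 2 / ZC) := by ring
    _ ≤ 1 / 2 * T := by
      gcongr
      exact div_le_of_le_mul₀ hZC0 hT0 ((le_sqrt (by positivity) (by positivity)).1 hgap)

/-- Energy constraints limit the accuracy of thermal catalysis. Let `β > 0`,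
let the catalyst energy levels `E : ℕ → ℝ` be nondecreasing, nonnegative and
unbounded with finite partition function `Z_C = ∑' j, e^{−β·E j}`, and let
`A ≥ 2` with `f(A) = (1/2)·A²/(A²+1)`. Suppose `ω, ω'` are probability
distributions on `ℕ`, the mean energy of `ω` is at most `Ē`, and the
`D_{1/2}`-monotonicity constraint
`∑' j, √(ω' j)·e^{−β·E j/2} ≥ √A·∑' j, √(ω j)·e^{−β·E j/2}` holds (both
series converging). Then for every `0 < W < 1`, with `j(W)` the least index
`j` such that `E (j+1) > Ē/(1−W)`, the trace distance satisfies
`(1/2)·∑' j, |ω j − ω' j| ≥ (1/2)·f(A)²·(W·e^{−β·E j(W)/2})²/Z_C`. -/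
theorem embezzling_error_energy_constraint
    (β : ℝ) (hβ : 0 < β)
    (E : ℕ → ℝ) (hmono : Monotone E) (hpos : ∀ j, 0 ≤ E j)
    (htop : Filter.Tendsto E Filter.atTop Filter.atTop)
    (ZC : ℝ) (hZCsummable : Summable (fun j => Real.exp (-β * E j)))
    (hZC : ∑' j, Real.exp (-β * E j) = ZC)
    (A : ℝ) (hA : 2 ≤ A)
    (ω ω' : ℕ → ℝ) (hω : ∀ j, 0 ≤ ω j) (hω' : ∀ j, 0 ≤ ω' j)
    (hωsummable : Summable ω) (hω'summable : Summable ω')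
    (hωsum : ∑' j, ω j = 1) (hω'sum : ∑' j, ω' j = 1)
    (Ebar : ℝ) (hEbar : 0 ≤ Ebar)
    (hEsummable : Summable (fun j => ω j * E j))
    (hE : ∑' j, ω j * E j ≤ Ebar)
    (h1 : Summable (fun j => Real.sqrt (ω' j) * Real.exp (-β * E j / 2)))
    (h2 : Summable (fun j => Real.sqrt (ω j) * Real.exp (-β * E j / 2)))
    (hmon : Real.sqrt A * ∑' j, Real.sqrt (ω j) * Real.exp (-β * E j / 2) ≤
      ∑' j, Real.sqrt (ω' j) * Real.exp (-β * E j / 2))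
    (W : ℝ) (hW0 : 0 < W) (hW1 : W < 1)
    (jW : ℕ) (hjW : IsLeast {j : ℕ | Ebar / (1 - W) < E (j + 1)} jW) :
    (1 / 2) * (1 / 2 * (A ^ 2 / (A ^ 2 + 1))) ^ 2 *
        (W * Real.exp (-β * E jW / 2)) ^ 2 / ZC ≤
      (1 / 2) * ∑' j, |ω j - ω' j| :=
  embezzling_error_energy_constraint_general β hβ E hmono hpos ZC hZCsummable hZC A hA ω ω' hω hω'
    hωsummable hω'summable hωsum Ebar hEsummable hE h1 h2 hmon W hW0 hW1 jW hjW
end
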